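/- For all complex q with |q| < 1, ((-q;q^2)_∞/(q^2;q^2)_∞) · ∑_{j≥0} q^{3j^2+2j}(1 - q^{2j+1}) equals ∑_{j≥0} q^{3j^2+2j} · ((-q;q^2)_j / (q^2;q^2)_{2j}) · ((-q^{2j+3};q^2)_∞ / (q^{4j+4};q^2)_∞). -/

import Mathlib

noncomputable def qPoch (a q : ℂ) (n : ℕ) : ℂ := ∏ i ∈ Finset.range n, (1 - a * q ^ i)

noncomputable def qPochInf (a q : ℂ) : ℂ := ∏' i : ℕ, (1 - a * q ^ i)

/-!
The identity holds term by term. Splitting off the first `j + 1` factors of `(-q;q²)_∞` and the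
first `2j + 1` factors of `(q²;q²)_∞` leaves the tails `(-q^(2j+3);q²)_∞` and `(q^(4j+4);q²)_∞`,
together with the extra factors `1 + q^(2j+1)` and `1 - q^(4j+2) = (1 - q^(2j+1))(1 + q^(2j+1))`,
which cancel against `1 - q^(2j+1)`.
-/

lemma qPoch_succ (a q : ℂ) (n : ℕ) : qPoch a q (n + 1) = qPoch a q n * (1 - a * q ^ n) :=
  Finset.prod_range_succ _ _

lemma qPoch_ne_zero {a q : ℂ} {n : ℕ} (h : ∀ i, 1 - a * q ^ i ≠ 0) : qPoch a q n ≠ 0 :=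
  Finset.prod_ne_zero_iff.mpr fun i _ ↦ h i

lemma one_sub_mul_pow_ne_zero {a q : ℂ} (ha : ‖a‖ < 1) (hq : ‖q‖ ≤ 1) (i : ℕ) :
    1 - a * q ^ i ≠ 0 := by
  refine sub_ne_zero.mpr fun h ↦ ?_
  have : ‖a * q ^ i‖ < 1 := by
    rw [norm_mul, norm_pow]
    exact mul_lt_one_of_nonneg_of_lt_one_left (norm_nonneg a) ha (pow_le_one₀ (norm_nonneg q) hq)
  simp [← h] at this

section

variable {q : ℂ} (hq : ‖q‖ < 1)
include hq

lemma summable_norm_neg_mul_pow (a : ℂ) : Summable fun i : ℕ ↦ ‖-(a * q ^ i)‖ := by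
  simpa [norm_mul, norm_pow] using
    (summable_geometric_of_lt_one (norm_nonneg q) hq).mul_left ‖a‖

lemma multipliable_one_sub_mul_pow (a : ℂ) : Multipliable fun i : ℕ ↦ 1 - a * q ^ i := by
  simp only [sub_eq_add_neg]
  exact multipliable_one_add_of_summable (f := fun i ↦ -(a * q ^ i))
    (summable_norm_neg_mul_pow hq a)

lemma qPochInf_eq_qPoch_mul (a : ℂ) (k : ℕ) :
    qPochInf a q = qPoch a q k * qPochInf (a * q ^ k) q := by
  have htail := (multipliable_one_sub_mul_pow hq (a * q ^ k)).hasProd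
  simp only [mul_assoc, ← pow_add, add_comm k] at htail
  simp only [qPochInf, qPoch, mul_assoc, ← pow_add, add_comm k]
  exact (htail.prod_range_mul (f := fun i ↦ 1 - a * q ^ i)).tprod_eq

lemma qPochInf_ne_zero {a : ℂ} (h : ∀ i, 1 - a * q ^ i ≠ 0) : qPochInf a q ≠ 0 := by
  simpa [qPochInf, sub_eq_add_neg] using
    tprod_one_add_ne_zero_of_summable (by simpa [sub_eq_add_neg] using h)
      (summable_norm_neg_mul_pow hq a)

lemma qPochInf_div_qPochInf (a b : ℂ) (hb : ∀ i, 1 - b * q ^ i ≠ 0) (m n : ℕ) :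
    qPochInf a q / qPochInf b q
      = qPoch a q m / qPoch b q n * (qPochInf (a * q ^ m) q / qPochInf (b * q ^ n) q) := by
  have hb' : ∀ i, 1 - b * q ^ n * q ^ i ≠ 0 := fun i ↦ by rw [mul_assoc, ← pow_add]; exact hb _
  have := qPoch_ne_zero (n := n) hb
  have := qPochInf_ne_zero hq hb'
  rw [qPochInf_eq_qPoch_mul hq a m, qPochInf_eq_qPoch_mul hq b n]
  field_simp

end

lemma qPochInf_div_mul_one_sub_pow {q : ℂ} (hq : ‖q‖ < 1) (j : ℕ) :
    qPochInf (-q) (q ^ 2) / qPochInf (q ^ 2) (q ^ 2) * (1 - q ^ (2 * j + 1))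
      = qPoch (-q) (q ^ 2) j / qPoch (q ^ 2) (q ^ 2) (2 * j)
          * (qPochInf (-(q ^ (2 * j + 3))) (q ^ 2) / qPochInf (q ^ (4 * j + 4)) (q ^ 2)) := by
  have hq2 : ‖q ^ 2‖ < 1 := by
    rw [norm_pow]; exact pow_lt_one₀ (norm_nonneg q) hq two_ne_zero
  have hb : ∀ i, 1 - q ^ 2 * (q ^ 2) ^ i ≠ 0 := one_sub_mul_pow_ne_zero hq2 hq2.le
  have e1 : -q * (q ^ 2) ^ (j + 1) = -(q ^ (2 * j + 3)) := by ring
  have e2 : q ^ 2 * (q ^ 2) ^ (2 * j + 1) = q ^ (4 * j + 4) := by ring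
  have e3 : -q * (q ^ 2) ^ j = -q ^ (2 * j + 1) := by ring
  have e4 : q ^ 2 * (q ^ 2) ^ (2 * j) = (q ^ (2 * j + 1)) ^ 2 := by ring
  have hQ := qPoch_ne_zero (n := 2 * j + 1) hb
  rw [qPoch_succ, e4] at hQ
  rw [qPochInf_div_qPochInf hq2 _ _ hb (j + 1) (2 * j + 1), qPoch_succ, qPoch_succ, e1, e2, e3, e4,
    mul_right_comm]
  congr 1
  rw [div_mul_eq_mul_div, div_eq_div_iff hQ (left_ne_zero_of_mul hQ)]
  ring

theorem stmt_5 (q : ℂ) (hq : ‖q‖ < 1) :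
    qPochInf (-q) (q ^ 2) / qPochInf (q ^ 2) (q ^ 2)
        * ∑' j : ℕ, q ^ (3 * j ^ 2 + 2 * j) * (1 - q ^ (2 * j + 1))
      = ∑' j : ℕ, q ^ (3 * j ^ 2 + 2 * j) * (qPoch (-q) (q ^ 2) j / qPoch (q ^ 2) (q ^ 2) (2 * j))
          * (qPochInf (-(q ^ (2 * j + 3))) (q ^ 2) / qPochInf (q ^ (4 * j + 4)) (q ^ 2)) := by
  rw [← tsum_mul_left]
  refine tsum_congr fun j ↦ ?_
  rw [mul_assoc, ← qPochInf_div_mul_one_sub_pow hq j]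
  ring
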